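/- Let B be a Banach space equipped with a continuous linear injection ι : B → H into a Hilbert space H. Let F be a closed linear subspace of B and let F̄ denote the closure of ι(F) in H. If the orthogonal projection p of H onto F̄ satisfies p(ι(b)) ∈ ι(F) for every b ∈ B, then F admits a closed complement in B: namely B = F ⊕ (ι⁻¹(F̄^⊥)) as a topological direct sum, where F̄^⊥ is the orthogonal complement of F̄ in H (equivalently, the projection of B onto F along ι⁻¹(F̄^⊥) is continuous). -/

import Mathlib

/- STATEMENT 0: Lemma (Lemma `technical` in the paper).
`B` a Banach space injecting continuously into a Hilbert space `H` via `ι`,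
`F` a closed subspace of `B`, `K = closure (ι F)` in `H`.  If the orthogonal
projection of `H` onto `K` maps `ι B` into `ι F`, then `B = F ⊕ ι⁻¹(Kᗮ)` as a
topological direct sum: the two subspaces are (closed) complements and the
projection of `B` onto `F` along `ι⁻¹(Kᗮ)` is continuous. -/

noncomputable section

open ContinuousLinearMap

/-- The orthogonal projection onto the topological closure of a submodule of a
Hilbert space. -/
noncomputable def closProj {𝕜 H : Type*} [RCLike 𝕜] [NormedAddCommGroup H]
    [InnerProductSpace 𝕜 H] [CompleteSpace H] (K : Submodule 𝕜 H) :
    H →L[𝕜] K.topologicalClosure :=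
  haveI : CompleteSpace K.topologicalClosure :=
    K.isClosed_topologicalClosure.completeSpace_coe
  K.topologicalClosure.orthogonalProjection

theorem statement0 {𝕜 : Type} [RCLike 𝕜]
    (B : Type) [NormedAddCommGroup B] [NormedSpace 𝕜 B] [CompleteSpace B]
    (H : Type) [NormedAddCommGroup H] [InnerProductSpace 𝕜 H] [CompleteSpace H]
    (ι : B →L[𝕜] H) (hι : Function.Injective ι)
    (F : Submodule 𝕜 B) (hF : IsClosed (F : Set B))
    -- the orthogonal projection of `H` onto the closure of `ι(F)` maps `ι(B)` into `ι(F)`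
    (hproj : ∀ b : B,
      ((closProj (F.map (ι : B →ₗ[𝕜] H)) (ι b) : H)) ∈ F.map (ι : B →ₗ[𝕜] H)) :
    -- `G := ι⁻¹(closure(ι F)ᗮ)` is a closed algebraic complement of `F` …
    IsClosed ((((F.map (ι : B →ₗ[𝕜] H)).topologicalClosureᗮ).comap
        (ι : B →ₗ[𝕜] H) : Submodule 𝕜 B) : Set B) ∧
    IsCompl F (((F.map (ι : B →ₗ[𝕜] H)).topologicalClosureᗮ).comap (ι : B →ₗ[𝕜] H)) ∧
    -- … and the associated projection onto `F` is continuous, so the direct sum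
    -- `B = F ⊕ ι⁻¹(closure(ι F)ᗮ)` is topological.
    ∃ π : B →L[𝕜] B,
      (∀ b ∈ F, π b = b) ∧
      (∀ b ∈ ((F.map (ι : B →ₗ[𝕜] H)).topologicalClosureᗮ).comap (ι : B →ₗ[𝕜] H), π b = 0) ∧
      (∀ b : B, π b ∈ F ∧
        b - π b ∈ ((F.map (ι : B →ₗ[𝕜] H)).topologicalClosureᗮ).comap (ι : B →ₗ[𝕜] H)) := by
  classical
  set M : Submodule 𝕜 H := F.map (ι : B →ₗ[𝕜] H) with hMdef
  set K : Submodule 𝕜 H := M.topologicalClosure with hKdef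
  haveI : CompleteSpace K := M.isClosed_topologicalClosure.completeSpace_coe
  -- choose the preimage of the projection
  choose π0 hmem heq using fun b => Submodule.mem_map.mp (hproj b)
  -- `heq b : ι (π0 b) = closProj M (ι b)`
  have hval : ∀ b : B, (ι (π0 b) : H) = (K.orthogonalProjectionOnto (ι b) : H) := fun b => heq b
  have hadd : ∀ x y : B, π0 (x + y) = π0 x + π0 y := by
    intro x y
    apply hι
    rw [map_add, hval, hval, hval, map_add]
    simp
  have hsmul : ∀ (c : 𝕜) (x : B), π0 (c • x) = c • π0 x := by
    intro c x
    apply hι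
    rw [map_smul, hval, hval, map_smul]
    simp
  let πlin : B →ₗ[𝕜] B :=
    { toFun := π0, map_add' := hadd, map_smul' := hsmul }
  have hcont : Continuous πlin := by
    apply πlin.continuous_of_seq_closed_graph
    intro u x y hux huy
    apply hι
    have h1 : Filter.Tendsto (fun n => ι (π0 (u n))) Filter.atTop (nhds (ι y)) :=
      (ι.continuous.tendsto y).comp huy
    have h2 : Filter.Tendsto (fun n => ι (π0 (u n))) Filter.atTop
        (nhds ((K.orthogonalProjectionOnto (ι x) : H))) := by
      have : Filter.Tendsto (fun n => ((K.orthogonalProjectionOnto (ι (u n))) : H))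
          Filter.atTop (nhds ((K.orthogonalProjectionOnto (ι x) : H))) := by
        exact ((continuous_subtype_val.comp
          K.orthogonalProjectionOnto.continuous).comp ι.continuous).tendsto x |>.comp hux
      simpa only [hval] using this
    have := tendsto_nhds_unique h1 h2
    exact this.trans (hval x).symm
  let π : B →L[𝕜] B := ⟨πlin, hcont⟩
  have hπF : ∀ b : B, π b ∈ F := fun b => hmem b
  have hid : ∀ b ∈ F, π b = b := by
    intro b hb
    apply hι
    have hbK : ι b ∈ K := Submodule.le_topologicalClosure M ⟨b, hb, rfl⟩
    show ι (π0 b) = ι b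
    rw [hval, Submodule.coe_orthogonalProjectionOnto_apply, Submodule.starProjection_eq_self_iff.mpr hbK]
  have hzero : ∀ b ∈ (Kᗮ).comap (ι : B →ₗ[𝕜] H), π b = 0 := by
    intro b hb
    apply hι
    have hb' : (ι b : H) ∈ Kᗮ := hb
    show ι (π0 b) = ι 0
    rw [hval, map_zero,
      Submodule.orthogonalProjectionOnto_apply_of_mem_orthogonal hb']
    simp
  have hsub : ∀ b : B, b - π b ∈ (Kᗮ).comap (ι : B →ₗ[𝕜] H) := by
    intro b
    have : ι (b - π b) ∈ Kᗮ := by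
      rw [map_sub]
      show ι b - ι (π0 b) ∈ Kᗮ
      rw [hval]
      exact Submodule.sub_starProjection_mem_orthogonal (ι b)
    exact this
  refine ⟨?_, ⟨?_, ?_⟩, π, hid, hzero, fun b => ⟨hπF b, hsub b⟩⟩
  · have : ((((Kᗮ).comap (ι : B →ₗ[𝕜] H)) : Submodule 𝕜 B) : Set B)
        = ι ⁻¹' (Kᗮ : Set H) := rfl
    rw [this]
    exact (Submodule.isClosed_orthogonal K).preimage ι.continuous
  · rw [Submodule.disjoint_def]
    intro b hbF hbG
    have := hzero b hbG
    rw [hid b hbF] at this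
    exact this
  · rw [codisjoint_iff, eq_top_iff]
    intro b _
    exact Submodule.mem_sup.mpr ⟨π b, hπF b, b - π b, hsub b, by abel⟩
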